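/- Let S be a set of polynomials with rational coefficients having at least two elements, each of degree at least 2, such that: (height controlled) there exists C ≥ 0 with |h(φ(x)) − deg(φ)·h(x)| ≤ C for every φ ∈ S and every x ∈ ℚ; (uniformly log-discrete) there exists δ > 0 with |log(deg φ) − log(deg ψ)| > δ for all distinct φ, ψ ∈ S; and (freeness) any two finite lists of elements of S whose compositions are equal as polynomials are equal as lists. Then for every ε > 0 there exist b > 0 and B₀ such that for every P ∈ ℚ with H(P) > B₀ there are constants c₁, c₂ > 0 and B₁ with c₁·(log B)^b ≤ #{L : L a finite list of elements of S with H(L(P)) ≤ B} ≤ c₂·(log B)^{b+ε} for all real B ≥ B₁. -/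

import Mathlib

open Polynomial

/-- Multiplicative Weil height of a rational number: `H(p/q) = max(|p|, q)`. -/
noncomputable def ratH (x : ℚ) : ℝ := max |(x.num : ℝ)| (x.den : ℝ)

/-- Logarithmic Weil height of a rational number. -/
noncomputable def rath (x : ℚ) : ℝ := Real.log (ratH x)

/-- Evaluation of a finite list of polynomials `[φ₁, …, φₘ]` at `P`:
`φ₁(φ₂(⋯φₘ(P)⋯))`, the empty list acting as the identity. -/
def applyList (L : List (Polynomial ℚ)) (P : ℚ) : ℚ :=
  L.foldr (fun φ x => φ.eval x) P

/-- Composition of a finite list of polynomials `[φ₁, …, φₘ]` as a single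
polynomial `φ₁ ∘ φ₂ ∘ ⋯ ∘ φₘ`, the empty list giving the identity `X`. -/
noncomputable def compList (L : List (Polynomial ℚ)) : Polynomial ℚ :=
  L.foldr (fun φ g => φ.comp g) Polynomial.X

namespace Stmt1Aux

lemma one_le_ratH (x : ℚ) : 1 ≤ ratH x := by
  have : (1:ℝ) ≤ (x.den : ℝ) := by exact_mod_cast Nat.one_le_iff_ne_zero.mpr x.den_nz
  exact this.trans (le_max_right _ _)

lemma rath_nonneg (x : ℚ) : 0 ≤ rath x := Real.log_nonneg (one_le_ratH x)

def Dlist (L : List (Polynomial ℚ)) : ℕ := (L.map Polynomial.natDegree).prod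

@[simp] lemma Dlist_nil : Dlist [] = 1 := rfl
@[simp] lemma Dlist_cons (φ : Polynomial ℚ) (L : List (Polynomial ℚ)) :
    Dlist (φ :: L) = φ.natDegree * Dlist L := rfl

def WSet (S : Set (Polynomial ℚ)) (T : ℝ) : Set (List (Polynomial ℚ)) :=
  {L | (∀ φ ∈ L, φ ∈ S) ∧ (Dlist L : ℝ) ≤ T}

/-- generic: sum of ncards of pairwise disjoint subsets of a finite set -/
lemma sum_ncard_le_ncard {α ι : Type*} (F : Finset ι) (A : ι → Set α) :
    ∀ B : Set α, B.Finite → (∀ i ∈ F, A i ⊆ B) →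
      (∀ i ∈ F, ∀ j ∈ F, i ≠ j → Disjoint (A i) (A j)) →
      ∑ i ∈ F, (A i).ncard ≤ B.ncard := by
  classical
  induction F using Finset.induction_on with
  | empty => simp
  | @insert a F ha ih =>
    intro B hB hsub hdisj
    rw [Finset.sum_insert ha]
    have hAa : A a ⊆ B := hsub a (Finset.mem_insert_self a F)
    have h1 : ∑ i ∈ F, (A i).ncard ≤ (B \ A a).ncard := by
      refine ih (B \ A a) (hB.diff) ?_ ?_
      · intro i hi x hx
        refine ⟨hsub i (Finset.mem_insert_of_mem hi) hx, ?_⟩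
        have hdis := hdisj a (Finset.mem_insert_self a F) i (Finset.mem_insert_of_mem hi)
          (fun h => ha (h ▸ hi))
        exact fun hxa => (Set.disjoint_left.mp hdis hxa) hx
      · intro i hi j hj hij
        exact hdisj i (Finset.mem_insert_of_mem hi) j (Finset.mem_insert_of_mem hj) hij
    have h2 : (B \ A a).ncard + (A a).ncard = B.ncard :=
      Set.ncard_diff_add_ncard_of_subset hAa hB
    omega
  
lemma ncard_biUnion_le {α ι : Type*} (F : Finset ι) (A : ι → Set α) :
    (⋃ i ∈ F, A i).ncard ≤ ∑ i ∈ F, (A i).ncard := by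
  classical
  induction F using Finset.induction_on with
  | empty => simp
  | @insert a F ha ih =>
    rw [Finset.sum_insert ha, Finset.set_biUnion_insert]
    exact le_trans (Set.ncard_union_le _ _) (by omega)

section S

variable {S : Set (Polynomial ℚ)} (hdeg : ∀ φ ∈ S, 2 ≤ φ.natDegree)
  (hinj : S.InjOn Polynomial.natDegree)

include hdeg in
lemma two_pow_length_le_Dlist {L : List (Polynomial ℚ)} (hL : ∀ φ ∈ L, φ ∈ S) :
    2 ^ L.length ≤ Dlist L := by
  induction L with
  | nil => simp
  | cons φ L ih =>
    have h1 : 2 ≤ φ.natDegree := hdeg φ (hL φ (by simp))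
    have h2 := ih (fun ψ hψ => hL ψ (by simp [hψ]))
    calc 2 ^ (φ :: L).length = 2 * 2 ^ L.length := by simp [pow_succ, mul_comm]
    _ ≤ φ.natDegree * Dlist L := Nat.mul_le_mul h1 h2

include hdeg in
lemma one_le_Dlist {L : List (Polynomial ℚ)} (hL : ∀ φ ∈ L, φ ∈ S) : 1 ≤ Dlist L :=
  le_trans Nat.one_le_two_pow (two_pow_length_le_Dlist hdeg hL)

include hinj in
omit hdeg in
lemma alph_finite (T : ℝ) : {φ ∈ S | (φ.natDegree : ℝ) ≤ T}.Finite := by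
  have hfin : {n : ℕ | (n : ℝ) ≤ T}.Finite := by
    apply Set.Finite.subset (Set.finite_Iic ⌈T⌉₊)
    intro n hn
    simp only [Set.mem_Iic]
    exact_mod_cast (Set.mem_setOf_eq ▸ hn).trans (Nat.le_ceil T)
  refine Set.Finite.of_finite_image ?_ (hinj.mono (Set.sep_subset _ _))
  exact hfin.subset (by rintro _ ⟨φ, hφ, rfl⟩; exact hφ.2)

include hdeg hinj in
lemma WSet_finite (T : ℝ) : (WSet S T).Finite := by
  classical
  set A := {φ ∈ S | (φ.natDegree : ℝ) ≤ T} with hA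
  have hAfin : A.Finite := alph_finite hinj T
  haveI : Finite ↥A := hAfin.to_subtype
  refine Set.Finite.subset ((List.finite_length_le ↥A ⌈T⌉₊).image (List.map Subtype.val)) ?_
  rintro L ⟨hLS, hLT⟩
  have hDpos : ∀ φ ∈ L, (1:ℕ) ≤ φ.natDegree := fun φ hφ =>
    le_trans (by norm_num) (hdeg φ (hLS φ hφ))
  have hmem : ∀ φ ∈ L, φ ∈ A := by
    intro φ hφ
    refine ⟨hLS φ hφ, ?_⟩
    have h1 : φ.natDegree ≤ Dlist L := by
      have := List.single_le_prod (l := L.map Polynomial.natDegree)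
        (by intro x hx; obtain ⟨ψ, hψ, rfl⟩ := List.mem_map.mp hx; exact hDpos ψ hψ)
        φ.natDegree (List.mem_map.mpr ⟨φ, hφ, rfl⟩)
      exact this
    calc (φ.natDegree : ℝ) ≤ (Dlist L : ℝ) := by exact_mod_cast h1
    _ ≤ T := hLT
  have hlen : L.length ≤ ⌈T⌉₊ := by
    have h1 : (2:ℕ) ^ L.length ≤ Dlist L := two_pow_length_le_Dlist hdeg hLS
    have h2 : ((2:ℕ) ^ L.length : ℝ) ≤ T := le_trans (by exact_mod_cast h1) hLT
    have h3 : (2:ℕ) ^ L.length ≤ ⌈T⌉₊ := by exact_mod_cast h2.trans (Nat.le_ceil T)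
    exact le_trans (Nat.lt_two_pow_self (n := L.length)).le h3
  refine ⟨L.pmap Subtype.mk hmem, ?_, ?_⟩
  · simp [hlen]
  · simp [List.map_pmap]

include hdeg hinj in
lemma W_rec_upper (T : ℝ) :
    (WSet S T).ncard ≤ 1 + ∑ φ ∈ (alph_finite hinj T).toFinset,
      (WSet S (T / (φ.natDegree : ℝ))).ncard := by
  classical
  set F := (alph_finite hinj T).toFinset with hF
  have hsub : WSet S T ⊆
      insert [] (⋃ φ ∈ F, (fun L => φ :: L) '' WSet S (T / (φ.natDegree : ℝ))) := by
    rintro L ⟨hLS, hLT⟩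
    cases L with
    | nil => exact Set.mem_insert _ _
    | cons φ L' =>
      refine Set.mem_insert_of_mem _ ?_
      have hφS : φ ∈ S := hLS φ (by simp)
      have hL'S : ∀ ψ ∈ L', ψ ∈ S := fun ψ hψ => hLS ψ (by simp [hψ])
      have hd2 : 2 ≤ φ.natDegree := hdeg φ hφS
      have hdpos : (0:ℝ) < (φ.natDegree : ℝ) := by positivity
      have hD1 : (1:ℝ) ≤ (Dlist L' : ℝ) := by exact_mod_cast one_le_Dlist hdeg hL'S
      have hdT : (φ.natDegree : ℝ) ≤ T := by
        calc (φ.natDegree : ℝ) = (φ.natDegree : ℝ) * 1 := by ring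
        _ ≤ (φ.natDegree : ℝ) * (Dlist L' : ℝ) := by nlinarith
        _ ≤ T := by simp only [Dlist_cons, Nat.cast_mul] at hLT; nlinarith
      have hφF : φ ∈ F := by simp [hF, Set.Finite.mem_toFinset]; exact ⟨hφS, hdT⟩
      refine Set.mem_biUnion hφF ?_
      refine ⟨L', ⟨hL'S, ?_⟩, rfl⟩
      rw [le_div_iff₀ hdpos]
      simp only [Dlist_cons, Nat.cast_mul] at hLT
      linarith
  have hfin : (⋃ φ ∈ F, (fun L => φ :: L) '' WSet S (T / (φ.natDegree : ℝ))).Finite := by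
    refine Set.Finite.biUnion (F.finite_toSet) ?_
    exact fun φ _ => (WSet_finite hdeg hinj _).image _
  calc (WSet S T).ncard ≤ (insert ([] : List (Polynomial ℚ))
      (⋃ φ ∈ F, (fun L => φ :: L) '' WSet S (T / (φ.natDegree : ℝ)))).ncard :=
        Set.ncard_le_ncard hsub (hfin.insert _)
  _ ≤ (⋃ φ ∈ F, (fun L => φ :: L) '' WSet S (T / (φ.natDegree : ℝ))).ncard + 1 :=
        Set.ncard_insert_le _ _
  _ ≤ (∑ φ ∈ F, ((fun L => φ :: L) '' WSet S (T / (φ.natDegree : ℝ))).ncard) + 1 := by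
        exact Nat.add_le_add_right (ncard_biUnion_le F _) 1
  _ = 1 + ∑ φ ∈ F, (WSet S (T / (φ.natDegree : ℝ))).ncard := by
        rw [Nat.add_comm]
        congr 1
        refine Finset.sum_congr rfl fun φ _ => ?_
        exact Set.ncard_image_of_injective _ (fun a b h => by simpa using h)

include hdeg hinj in
lemma W_rec_lower (T : ℝ) (F : Finset (Polynomial ℚ)) (hFS : ↑F ⊆ S) :
    ∑ φ ∈ F, (WSet S (T / (φ.natDegree : ℝ))).ncard ≤ (WSet S T).ncard := by
  classical
  have key := sum_ncard_le_ncard F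
    (fun φ => (fun L => φ :: L) '' WSet S (T / (φ.natDegree : ℝ))) (WSet S T)
    (WSet_finite hdeg hinj T) ?_ ?_
  · calc ∑ φ ∈ F, (WSet S (T / (φ.natDegree : ℝ))).ncard
        = ∑ φ ∈ F, ((fun L => φ :: L) '' WSet S (T / (φ.natDegree : ℝ))).ncard := by
          refine Finset.sum_congr rfl fun φ _ => ?_
          exact (Set.ncard_image_of_injective _ (fun a b h => by simpa using h)).symm
    _ ≤ (WSet S T).ncard := key
  · rintro φ hφ _ ⟨L', ⟨hL'S, hL'T⟩, rfl⟩
    have hφS : φ ∈ S := hFS hφ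
    have hdpos : (0:ℝ) < (φ.natDegree : ℝ) := by
      have := hdeg φ hφS; positivity
    refine ⟨fun ψ hψ => ?_, ?_⟩
    · rcases List.mem_cons.mp hψ with rfl | h
      · exact hφS
      · exact hL'S ψ h
    · have := (le_div_iff₀ hdpos).mp hL'T
      simp only [Dlist_cons, Nat.cast_mul]
      linarith
  · intro φ _ ψ _ hne
    rw [Set.disjoint_left]
    rintro _ ⟨L₁, _, rfl⟩ ⟨L₂, _, hEq⟩
    exact hne (by injection hEq.symm)

include hdeg hinj in
lemma W_upper (s θ K : ℝ) (hθ1 : θ < 1) (hs : 0 < s)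
    (hsum : ∀ F : Finset (Polynomial ℚ), ↑F ⊆ S →
      ∑ φ ∈ F, ((φ.natDegree : ℝ)) ^ (-s) ≤ θ)
    (hK : 1 ≤ K) (hK2 : 1 ≤ K * (1 - θ)) :
    ∀ n : ℕ, ∀ T : ℝ, 1 ≤ T → T ≤ n → ((WSet S T).ncard : ℝ) ≤ K * T ^ s := by
  intro n
  induction n using Nat.strong_induction_on with
  | _ n ih =>
    intro T hT1 hTn
    have hTs1 : (1:ℝ) ≤ T ^ s := Real.one_le_rpow hT1 hs.le
    by_cases hT2 : T < 2
    · -- WSet S T = {[]}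
      have hset : WSet S T = {[]} := by
        ext L
        constructor
        · rintro ⟨hLS, hLT⟩
          cases L with
          | nil => rfl
          | cons φ L' =>
            exfalso
            have h2 : (2:ℕ) ≤ Dlist (φ :: L') := by
              have := two_pow_length_le_Dlist hdeg hLS
              calc (2:ℕ) = 2 ^ 1 := by norm_num
              _ ≤ 2 ^ (φ :: L').length := Nat.pow_le_pow_right (by norm_num) (by simp)
              _ ≤ Dlist (φ :: L') := this
            have : (2:ℝ) ≤ T := le_trans (by exact_mod_cast h2) hLT
            linarith
        · rintro rfl
          exact ⟨by simp, by simp; linarith⟩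
      rw [hset]
      simp only [Set.ncard_singleton, Nat.cast_one]
      nlinarith
    · push_neg at hT2
      have hn2 : 2 ≤ n := by
        have : (2:ℝ) ≤ (n:ℝ) := le_trans hT2 hTn
        exact_mod_cast this
      set F := (alph_finite hinj T).toFinset with hFdef
      have hFS : ↑F ⊆ S := by
        intro φ hφ
        exact ((alph_finite hinj T).mem_toFinset.mp hφ).1
      have hrec := W_rec_upper hdeg hinj T
      have hterm : ∀ φ ∈ F, ((WSet S (T / (φ.natDegree : ℝ))).ncard : ℝ)
          ≤ K * T ^ s * ((φ.natDegree : ℝ)) ^ (-s) := by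
        intro φ hφ
        obtain ⟨hφS, hφT⟩ := (alph_finite hinj T).mem_toFinset.mp hφ
        have hd2 : (2:ℝ) ≤ (φ.natDegree : ℝ) := by exact_mod_cast hdeg φ hφS
        have hdpos : (0:ℝ) < (φ.natDegree : ℝ) := by linarith
        have h1 : 1 ≤ T / (φ.natDegree : ℝ) := (one_le_div hdpos).mpr hφT
        have h2 : T / (φ.natDegree : ℝ) ≤ (n - 1 : ℕ) := by
          have : T / (φ.natDegree : ℝ) ≤ T / 2 := by
            apply div_le_div_of_nonneg_left (by linarith) (by norm_num) hd2
          have h3 : T / 2 ≤ (n:ℝ) / 2 := by linarith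
          have h4 : (n:ℝ) / 2 ≤ (n:ℝ) - 1 := by
            have : (2:ℝ) ≤ (n:ℝ) := by exact_mod_cast hn2
            linarith
          have h5 : ((n - 1 : ℕ) : ℝ) = (n:ℝ) - 1 := by
            have : 1 ≤ n := by omega
            push_cast [this]; ring
          linarith
        have := ih (n-1) (by omega) (T / (φ.natDegree : ℝ)) h1 h2
        calc ((WSet S (T / (φ.natDegree : ℝ))).ncard : ℝ)
            ≤ K * (T / (φ.natDegree : ℝ)) ^ s := this
        _ = K * T ^ s * ((φ.natDegree : ℝ)) ^ (-s) := by
            rw [Real.div_rpow (by linarith) hdpos.le, Real.rpow_neg hdpos.le]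
            ring
      have hsum' : ∑ φ ∈ F, ((WSet S (T / (φ.natDegree : ℝ))).ncard : ℝ)
          ≤ K * T ^ s * θ := by
        calc ∑ φ ∈ F, ((WSet S (T / (φ.natDegree : ℝ))).ncard : ℝ)
            ≤ ∑ φ ∈ F, K * T ^ s * ((φ.natDegree : ℝ)) ^ (-s) :=
              Finset.sum_le_sum hterm
        _ = K * T ^ s * ∑ φ ∈ F, ((φ.natDegree : ℝ)) ^ (-s) := by
              rw [Finset.mul_sum]
        _ ≤ K * T ^ s * θ := by
              apply mul_le_mul_of_nonneg_left (hsum F hFS)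
              positivity
      calc ((WSet S T).ncard : ℝ)
          ≤ 1 + ∑ φ ∈ F, ((WSet S (T / (φ.natDegree : ℝ))).ncard : ℝ) := by
            push_cast
            exact_mod_cast Nat.cast_le.mpr hrec |>.trans (by push_cast; linarith)
      _ ≤ 1 + K * T ^ s * θ := by linarith
      _ ≤ K * T ^ s := by nlinarith

include hdeg hinj in
lemma W_lower (b : ℝ) (hb : 0 < b) (F : Finset (Polynomial ℚ)) (hFS : ↑F ⊆ S)
    (hσ : 1 ≤ ∑ φ ∈ F, ((φ.natDegree : ℝ)) ^ (-b)) :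
    ∀ n : ℕ, ∀ T : ℝ, 1 ≤ T → T ≤ n →
      (((F.sup Polynomial.natDegree : ℕ) : ℝ)) ^ (-b) * T ^ b ≤ ((WSet S T).ncard : ℝ) := by
  classical
  set Dm : ℕ := F.sup Polynomial.natDegree with hDm
  have hFne : F.Nonempty := by
    by_contra h
    rw [Finset.not_nonempty_iff_eq_empty] at h
    simp [h] at hσ
    linarith
  have hDm2 : 2 ≤ Dm := by
    obtain ⟨φ, hφ⟩ := hFne
    exact le_trans (hdeg φ (hFS hφ)) (Finset.le_sup hφ)
  have hDmR : (2:ℝ) ≤ (Dm:ℝ) := by exact_mod_cast hDm2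
  have hDmpos : (0:ℝ) < (Dm:ℝ) := by linarith
  intro n
  induction n using Nat.strong_induction_on with
  | _ n ih =>
    intro T hT1 hTn
    have hT0 : (0:ℝ) < T := by linarith
    by_cases hTD : T < (Dm:ℝ)
    · -- base case: empty list gives ncard ≥ 1
      have h1 : 1 ≤ (WSet S T).ncard := by
        rw [Nat.one_le_iff_ne_zero, ← Nat.pos_iff_ne_zero]
        rw [Set.ncard_pos (WSet_finite hdeg hinj T)]
        exact ⟨[], by simp, by simp; linarith⟩
      have h2 : ((Dm:ℝ)) ^ (-b) * T ^ b ≤ 1 := by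
        have hTb : T ^ b ≤ (Dm:ℝ) ^ b := Real.rpow_le_rpow hT0.le hTD.le hb.le
        calc ((Dm:ℝ)) ^ (-b) * T ^ b ≤ ((Dm:ℝ)) ^ (-b) * (Dm:ℝ) ^ b := by
              apply mul_le_mul_of_nonneg_left hTb (by positivity)
        _ = 1 := by rw [← Real.rpow_add hDmpos]; simp
      calc ((Dm:ℝ)) ^ (-b) * T ^ b ≤ 1 := h2
      _ ≤ ((WSet S T).ncard : ℝ) := by exact_mod_cast h1
    · push_neg at hTD
      have hn2 : 2 ≤ n := by
        have : (2:ℝ) ≤ (n:ℝ) := by linarith [hTn]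
        exact_mod_cast this
      have hterm : ∀ φ ∈ F, ((Dm:ℝ)) ^ (-b) * T ^ b * ((φ.natDegree : ℝ)) ^ (-b)
          ≤ ((WSet S (T / (φ.natDegree : ℝ))).ncard : ℝ) := by
        intro φ hφ
        have hd2 : (2:ℝ) ≤ (φ.natDegree : ℝ) := by exact_mod_cast hdeg φ (hFS hφ)
        have hdpos : (0:ℝ) < (φ.natDegree : ℝ) := by linarith
        have hdDm : (φ.natDegree : ℝ) ≤ (Dm:ℝ) := by exact_mod_cast Finset.le_sup hφ
        have h1 : 1 ≤ T / (φ.natDegree : ℝ) := by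
          rw [le_div_iff₀ hdpos]; linarith
        have h2 : T / (φ.natDegree : ℝ) ≤ (n - 1 : ℕ) := by
          have hA : T / (φ.natDegree : ℝ) ≤ T / 2 :=
            div_le_div_of_nonneg_left hT0.le (by norm_num) hd2
          have h4 : (n:ℝ) / 2 ≤ (n:ℝ) - 1 := by
            have : (2:ℝ) ≤ (n:ℝ) := by exact_mod_cast hn2
            linarith
          have h5 : ((n - 1 : ℕ) : ℝ) = (n:ℝ) - 1 := by
            have : 1 ≤ n := by omega
            push_cast [this]; ring
          linarith
        have := ih (n-1) (by omega) (T / (φ.natDegree : ℝ)) h1 h2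
        calc ((Dm:ℝ)) ^ (-b) * T ^ b * ((φ.natDegree : ℝ)) ^ (-b)
            = ((Dm:ℝ)) ^ (-b) * (T / (φ.natDegree : ℝ)) ^ b := by
              rw [Real.div_rpow hT0.le hdpos.le, Real.rpow_neg hdpos.le]
              ring
        _ ≤ ((WSet S (T / (φ.natDegree : ℝ))).ncard : ℝ) := this
      have hrec := W_rec_lower hdeg hinj T F hFS
      calc ((Dm:ℝ)) ^ (-b) * T ^ b
          = ((Dm:ℝ)) ^ (-b) * T ^ b * 1 := by ring
      _ ≤ ((Dm:ℝ)) ^ (-b) * T ^ b * ∑ φ ∈ F, ((φ.natDegree : ℝ)) ^ (-b) := by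
            apply mul_le_mul_of_nonneg_left hσ (by positivity)
      _ = ∑ φ ∈ F, ((Dm:ℝ)) ^ (-b) * T ^ b * ((φ.natDegree : ℝ)) ^ (-b) := by
            rw [Finset.mul_sum]
      _ ≤ ∑ φ ∈ F, ((WSet S (T / (φ.natDegree : ℝ))).ncard : ℝ) :=
            Finset.sum_le_sum hterm
      _ ≤ ((WSet S T).ncard : ℝ) := by exact_mod_cast hrec

include hdeg in
omit hinj in
lemma height_telescope (C : ℝ) (hC0 : 0 ≤ C)
    (hC : ∀ φ ∈ S, ∀ x : ℚ, |rath (φ.eval x) - (φ.natDegree : ℝ) * rath x| ≤ C)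
    (P : ℚ) : ∀ {L : List (Polynomial ℚ)}, (∀ φ ∈ L, φ ∈ S) →
      |rath (applyList L P) - (Dlist L : ℝ) * rath P| ≤ C * (2 * (Dlist L : ℝ) - 1) := by
  intro L
  induction L with
  | nil => intro _; simp [applyList]; linarith
  | cons φ L' ih =>
    intro hL
    have hφS : φ ∈ S := hL φ (by simp)
    have hL'S : ∀ ψ ∈ L', ψ ∈ S := fun ψ hψ => hL ψ (by simp [hψ])
    have hd2 : (2:ℝ) ≤ (φ.natDegree : ℝ) := by exact_mod_cast hdeg φ hφS
    have hD1 : (1:ℝ) ≤ (Dlist L' : ℝ) := by exact_mod_cast one_le_Dlist hdeg hL'S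
    have happ : applyList (φ :: L') P = φ.eval (applyList L' P) := rfl
    have h1 := hC φ hφS (applyList L' P)
    have h2 := ih hL'S
    have h3 : |((φ.natDegree : ℝ)) * rath (applyList L' P)
        - ((φ.natDegree : ℝ)) * ((Dlist L' : ℝ) * rath P)|
        ≤ (φ.natDegree : ℝ) * (C * (2 * (Dlist L' : ℝ) - 1)) := by
      rw [← mul_sub, abs_mul, abs_of_nonneg (by linarith : (0:ℝ) ≤ (φ.natDegree : ℝ))]
      exact mul_le_mul_of_nonneg_left h2 (by linarith)
    rw [happ]
    simp only [Dlist_cons, Nat.cast_mul]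
    have := abs_sub_le (rath (φ.eval (applyList L' P)))
      ((φ.natDegree : ℝ) * rath (applyList L' P))
      ((φ.natDegree : ℝ) * ((Dlist L' : ℝ) * rath P))
    have hgoal : |rath (φ.eval (applyList L' P))
        - (φ.natDegree : ℝ) * ((Dlist L' : ℝ) * rath P)|
        ≤ C + (φ.natDegree : ℝ) * (C * (2 * (Dlist L' : ℝ) - 1)) := by
      calc |rath (φ.eval (applyList L' P)) - (φ.natDegree : ℝ) * ((Dlist L' : ℝ) * rath P)|
          ≤ |rath (φ.eval (applyList L' P)) - (φ.natDegree : ℝ) * rath (applyList L' P)|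
            + |((φ.natDegree : ℝ)) * rath (applyList L' P)
              - ((φ.natDegree : ℝ)) * ((Dlist L' : ℝ) * rath P)| := this
      _ ≤ C + (φ.natDegree : ℝ) * (C * (2 * (Dlist L' : ℝ) - 1)) := by
            exact add_le_add h1 h3
    have heq : (φ.natDegree : ℝ) * ((Dlist L' : ℝ) * rath P)
        = (φ.natDegree : ℝ) * (Dlist L' : ℝ) * rath P := by ring
    rw [← heq]
    refine hgoal.trans ?_
    nlinarith

end S

lemma telesum : ∀ N : ℕ, 1 ≤ N →
    ∑ n ∈ Finset.Icc 2 N, (1 / ((n:ℝ) - 1) - 1 / (n:ℝ)) = 1 - 1 / (N:ℝ) := by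
  intro N
  induction N with
  | zero => omega
  | succ N ih =>
    intro _
    by_cases hN : 1 ≤ N
    · rw [Finset.sum_Icc_succ_top (by omega), ih hN]
      have hN0 : (N:ℝ) ≠ 0 := by positivity
      have hN1 : (N:ℝ) + 1 ≠ 0 := by positivity
      push_cast
      rw [add_sub_cancel_right]
      field_simp
      ring
    · have : N = 0 := by omega
      subst this
      norm_num

lemma zeta_bound (G : Finset ℕ) (hG : ∀ n ∈ G, 2 ≤ n) :
    ∑ n ∈ G, ((n:ℝ)) ^ (-(2:ℝ)) < 1 := by
  classical
  set N : ℕ := max (G.sup id) 1 with hN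
  have hN1 : 1 ≤ N := le_max_right _ _
  have hGsub : G ⊆ Finset.Icc 2 N := by
    intro n hn
    rw [Finset.mem_Icc]
    exact ⟨hG n hn, le_trans (Finset.le_sup (f := id) hn) (le_max_left _ _)⟩
  have hterm : ∀ n ∈ Finset.Icc 2 N, ((n:ℝ)) ^ (-(2:ℝ)) ≤ 1 / ((n:ℝ) - 1) - 1 / (n:ℝ) := by
    intro n hn
    have h2 : 2 ≤ n := (Finset.mem_Icc.mp hn).1
    have h2R : (2:ℝ) ≤ (n:ℝ) := by exact_mod_cast h2
    have hpos : (0:ℝ) < (n:ℝ) := by linarith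
    have hpos1 : (0:ℝ) < (n:ℝ) - 1 := by linarith
    have hrw : ((n:ℝ)) ^ (-(2:ℝ)) = 1 / ((n:ℝ) * (n:ℝ)) := by
      rw [Real.rpow_neg hpos.le]
      rw [show ((2:ℝ)) = ((2:ℕ):ℝ) by norm_num, Real.rpow_natCast]
      rw [one_div, sq]
    rw [hrw]
    rw [div_sub_div _ _ (ne_of_gt hpos1) (ne_of_gt hpos), div_le_div_iff₀ (by positivity) (by positivity)]
    ring_nf
    nlinarith
  have hnonneg : ∀ n ∈ Finset.Icc 2 N, (0:ℝ) ≤ 1 / ((n:ℝ) - 1) - 1 / (n:ℝ) := by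
    intro n hn
    have h2 : 2 ≤ n := (Finset.mem_Icc.mp hn).1
    have h2R : (2:ℝ) ≤ (n:ℝ) := by exact_mod_cast h2
    have : (0:ℝ) < (n:ℝ) - 1 := by linarith
    have h1 : 1 / (n:ℝ) ≤ 1 / ((n:ℝ) - 1) := by
      apply one_div_le_one_div_of_le this
      linarith
    linarith
  calc ∑ n ∈ G, ((n:ℝ)) ^ (-(2:ℝ))
      ≤ ∑ n ∈ G, (1 / ((n:ℝ) - 1) - 1 / (n:ℝ)) :=
        Finset.sum_le_sum (fun n hn => hterm n (hGsub hn))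
  _ ≤ ∑ n ∈ Finset.Icc 2 N, (1 / ((n:ℝ) - 1) - 1 / (n:ℝ)) :=
        Finset.sum_le_sum_of_subset_of_nonneg hGsub (fun n hn _ => hnonneg n hn)
  _ = 1 - 1 / (N:ℝ) := telesum N hN1
  _ < 1 := by
        have : (0:ℝ) < (N:ℝ) := by exact_mod_cast Nat.lt_of_lt_of_le Nat.zero_lt_one hN1
        have : (0:ℝ) < 1 / (N:ℝ) := by positivity
        linarith

lemma sandwich (D h r C : ℝ) (hC : 0 ≤ C) (hD : 1 ≤ D)
    (h1 : |r - D * h| ≤ C * (2 * D - 1)) :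
    D * (h - 2*C) ≤ r ∧ r ≤ D * (h + 2*C) := by
  obtain ⟨ha, hb⟩ := abs_le.mp h1
  constructor <;> nlinarith

def specSet (S : Set (Polynomial ℚ)) : Set ℝ :=
  {s | 0 < s ∧ ∃ F : Finset (Polynomial ℚ), ↑F ⊆ S ∧
    1 < ∑ φ ∈ F, ((φ.natDegree : ℝ)) ^ (-s)}

lemma specSet_nonempty {S : Set (Polynomial ℚ)} (hnt : S.Nontrivial)
    (hdeg : ∀ φ ∈ S, 2 ≤ φ.natDegree) : (specSet S).Nonempty := by
  classical
  obtain ⟨φ, hφ, ψ, hψ, hne⟩ := hnt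
  have hd2 : (2:ℝ) ≤ (φ.natDegree : ℝ) := by exact_mod_cast hdeg φ hφ
  have he2 : (2:ℝ) ≤ (ψ.natDegree : ℝ) := by exact_mod_cast hdeg ψ hψ
  have hld : 0 < Real.log (φ.natDegree : ℝ) := Real.log_pos (by linarith)
  have hle : 0 < Real.log (ψ.natDegree : ℝ) := Real.log_pos (by linarith)
  have hl2 : 0 < Real.log 2 := Real.log_pos one_lt_two
  set s₀ : ℝ := min (Real.log 2 / (2 * Real.log (φ.natDegree : ℝ)))
    (Real.log 2 / (2 * Real.log (ψ.natDegree : ℝ))) with hs₀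
  have hs₀pos : 0 < s₀ := lt_min (by positivity) (by positivity)
  have key : ∀ χ : Polynomial ℚ, χ ∈ S →
      s₀ ≤ Real.log 2 / (2 * Real.log (χ.natDegree : ℝ)) →
      (1:ℝ)/2 < ((χ.natDegree : ℝ)) ^ (-s₀) := by
    intro χ hχ hs
    have hc2 : (2:ℝ) ≤ (χ.natDegree : ℝ) := by exact_mod_cast hdeg χ hχ
    have hcpos : (0:ℝ) < (χ.natDegree : ℝ) := by linarith
    have hlc : 0 < Real.log (χ.natDegree : ℝ) := Real.log_pos (by linarith)
    have h1 : s₀ * Real.log (χ.natDegree : ℝ) < Real.log 2 := by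
      have hmul := mul_le_mul_of_nonneg_right hs hlc.le
      have heq : Real.log 2 / (2 * Real.log (χ.natDegree : ℝ)) * Real.log (χ.natDegree : ℝ)
          = Real.log 2 / 2 := by field_simp
      rw [heq] at hmul
      linarith
    have h3 : ((χ.natDegree : ℝ)) ^ (-s₀) = Real.exp (-(s₀ * Real.log (χ.natDegree : ℝ))) := by
      rw [Real.rpow_def_of_pos hcpos]; ring_nf
    rw [h3]
    have h4 : Real.exp (-Real.log 2) < Real.exp (-(s₀ * Real.log (χ.natDegree : ℝ))) :=
      Real.exp_lt_exp.mpr (by linarith)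
    have h5 : Real.exp (-Real.log 2) = 1/2 := by
      rw [Real.exp_neg, Real.exp_log (by norm_num : (0:ℝ) < 2)]
      norm_num
    linarith
  refine ⟨s₀, hs₀pos, {φ, ψ}, ?_, ?_⟩
  · intro χ hχ
    rcases Finset.mem_insert.mp hχ with rfl | h
    · exact hφ
    · rw [Finset.mem_singleton] at h; exact h ▸ hψ
  · rw [Finset.sum_pair hne]
    have h1 := key φ hφ (min_le_left _ _)
    have h2 := key ψ hψ (min_le_right _ _)
    linarith

lemma specSet_lt_two {S : Set (Polynomial ℚ)} (hdeg : ∀ φ ∈ S, 2 ≤ φ.natDegree)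
    (hinj : S.InjOn Polynomial.natDegree) : ∀ s ∈ specSet S, s < 2 := by
  classical
  rintro s ⟨hs0, F, hFS, hFσ⟩
  by_contra h
  push_neg at h
  have hbound : ∑ φ ∈ F, ((φ.natDegree : ℝ)) ^ (-s) < 1 := by
    have h1 : ∀ φ ∈ F, ((φ.natDegree : ℝ)) ^ (-s) ≤ ((φ.natDegree : ℝ)) ^ (-(2:ℝ)) := by
      intro φ hφ
      have hd2 : (2:ℝ) ≤ (φ.natDegree : ℝ) := by exact_mod_cast hdeg φ (hFS hφ)
      exact Real.rpow_le_rpow_of_exponent_le (by linarith) (by linarith)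
    have h2 : ∑ φ ∈ F, ((φ.natDegree : ℝ)) ^ (-(2:ℝ))
        = ∑ n ∈ F.image Polynomial.natDegree, ((n : ℝ)) ^ (-(2:ℝ)) := by
      rw [Finset.sum_image]
      intro x hx y hy hxy
      exact hinj (hFS hx) (hFS hy) hxy
    calc ∑ φ ∈ F, ((φ.natDegree : ℝ)) ^ (-s)
        ≤ ∑ φ ∈ F, ((φ.natDegree : ℝ)) ^ (-(2:ℝ)) := Finset.sum_le_sum h1
    _ = ∑ n ∈ F.image Polynomial.natDegree, ((n : ℝ)) ^ (-(2:ℝ)) := h2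
    _ < 1 := by
        apply zeta_bound
        intro n hn
        obtain ⟨φ, hφ, rfl⟩ := Finset.mem_image.mp hn
        exact hdeg φ (hFS hφ)
  linarith

end Stmt1Aux

open Stmt1Aux in
theorem stmt1 (S : Set (Polynomial ℚ))
    (hnt : S.Nontrivial)
    (hdeg : ∀ φ ∈ S, 2 ≤ φ.natDegree)
    (hheight : ∃ C : ℝ, 0 ≤ C ∧ ∀ φ ∈ S, ∀ x : ℚ,
      |rath (φ.eval x) - (φ.natDegree : ℝ) * rath x| ≤ C)
    (hlogdisc : ∃ δ : ℝ, 0 < δ ∧ ∀ φ ∈ S, ∀ ψ ∈ S, φ ≠ ψ →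
      |Real.log (φ.natDegree : ℝ) - Real.log (ψ.natDegree : ℝ)| > δ)
    (hfree : ∀ L₁ L₂ : List (Polynomial ℚ), (∀ φ ∈ L₁, φ ∈ S) → (∀ φ ∈ L₂, φ ∈ S) →
      compList L₁ = compList L₂ → L₁ = L₂) :
    ∀ ε : ℝ, 0 < ε → ∃ b : ℝ, 0 < b ∧ ∃ B₀ : ℝ, ∀ P : ℚ, ratH P > B₀ →
      ∃ c₁ c₂ B₁ : ℝ, 0 < c₁ ∧ 0 < c₂ ∧ ∀ B : ℝ, B₁ ≤ B →
        ({L : List (Polynomial ℚ) | (∀ φ ∈ L, φ ∈ S) ∧ ratH (applyList L P) ≤ B}).Finite ∧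
        c₁ * Real.log B ^ b ≤
          (({L : List (Polynomial ℚ) | (∀ φ ∈ L, φ ∈ S) ∧ ratH (applyList L P) ≤ B}).ncard : ℝ) ∧
        (({L : List (Polynomial ℚ) | (∀ φ ∈ L, φ ∈ S) ∧ ratH (applyList L P) ≤ B}).ncard : ℝ) ≤
          c₂ * Real.log B ^ (b + ε) := by
  classical
  intro ε hε
  obtain ⟨C, hC0, hC⟩ := hheight
  obtain ⟨δ, hδ, hdisc⟩ := hlogdisc
  have hinj : S.InjOn Polynomial.natDegree := by
    intro φ hφ ψ hψ h
    by_contra hne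
    have h1 := hdisc φ hφ ψ hψ hne
    rw [h] at h1
    simp at h1
    linarith
  have hne𝒟 : (specSet S).Nonempty := specSet_nonempty hnt hdeg
  have hbdd : BddAbove (specSet S) := ⟨2, fun s hs => (specSet_lt_two hdeg hinj s hs).le⟩
  set ρ := sSup (specSet S) with hρ
  obtain ⟨b, hb𝒟, hbgt⟩ := exists_lt_of_lt_csSup hne𝒟 (show ρ - ε/2 < ρ by linarith)
  have hbρ : b ≤ ρ := le_csSup hbdd hb𝒟
  obtain ⟨hb0, F, hFS, hFσ⟩ := hb𝒟
  -- θ and K setup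
  set s₁ := ρ + ε/4 with hs₁def
  have hs₁n : s₁ ∉ specSet S := fun h => absurd (le_csSup hbdd h) (by rw [hs₁def]; linarith)
  have hs₁pos : 0 < s₁ := by
    obtain ⟨s₀, hs₀⟩ := hne𝒟
    have := le_csSup hbdd hs₀
    have := hs₀.1
    rw [hs₁def]; linarith
  have hsum₁ : ∀ G : Finset (Polynomial ℚ), ↑G ⊆ S →
      ∑ φ ∈ G, ((φ.natDegree : ℝ)) ^ (-s₁) ≤ 1 := by
    intro G hG
    by_contra h
    push_neg at h
    exact hs₁n ⟨hs₁pos, G, hG, h⟩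
  set t := b + ε - s₁ with htdef
  have ht0 : 0 < t := by rw [htdef, hs₁def]; linarith
  set θ := (2:ℝ) ^ (-t) with hθdef
  have hθ0 : 0 < θ := Real.rpow_pos_of_pos two_pos _
  have hθ1 : θ < 1 := Real.rpow_lt_one_of_one_lt_of_neg one_lt_two (by linarith)
  have hsumS : ∀ G : Finset (Polynomial ℚ), ↑G ⊆ S →
      ∑ φ ∈ G, ((φ.natDegree : ℝ)) ^ (-(b + ε)) ≤ θ := by
    intro G hG
    have hterm : ∀ φ ∈ G, ((φ.natDegree : ℝ)) ^ (-(b + ε))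
        ≤ ((φ.natDegree : ℝ)) ^ (-s₁) * θ := by
      intro φ hφ
      have hd2 : (2:ℝ) ≤ (φ.natDegree : ℝ) := by exact_mod_cast hdeg φ (hG hφ)
      have hdpos : (0:ℝ) < (φ.natDegree : ℝ) := by linarith
      have hsplit : ((φ.natDegree : ℝ)) ^ (-(b + ε))
          = ((φ.natDegree : ℝ)) ^ (-s₁) * ((φ.natDegree : ℝ)) ^ (-t) := by
        rw [← Real.rpow_add hdpos]
        congr 1
        rw [htdef]; ring
      rw [hsplit]
      apply mul_le_mul_of_nonneg_left _ (by positivity)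
      -- d^(-t) ≤ 2^(-t)
      rw [hθdef, Real.rpow_neg hdpos.le, Real.rpow_neg (by norm_num : (0:ℝ) ≤ 2)]
      exact inv_anti₀ (Real.rpow_pos_of_pos two_pos t)
        (Real.rpow_le_rpow (by norm_num) hd2 ht0.le)
    calc ∑ φ ∈ G, ((φ.natDegree : ℝ)) ^ (-(b + ε))
        ≤ ∑ φ ∈ G, ((φ.natDegree : ℝ)) ^ (-s₁) * θ := Finset.sum_le_sum hterm
    _ = (∑ φ ∈ G, ((φ.natDegree : ℝ)) ^ (-s₁)) * θ := by rw [Finset.sum_mul]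
    _ ≤ 1 * θ := mul_le_mul_of_nonneg_right (hsum₁ G hG) hθ0.le
    _ = θ := one_mul θ
  set K := max 1 (1/(1-θ)) with hKdef
  have hK : 1 ≤ K := le_max_left _ _
  have hK2 : 1 ≤ K * (1 - θ) := by
    have h1 : 1/(1-θ) ≤ K := le_max_right _ _
    have h2 : 0 < 1 - θ := by linarith
    calc (1:ℝ) = 1/(1-θ) * (1-θ) := by field_simp
    _ ≤ K * (1-θ) := mul_le_mul_of_nonneg_right h1 h2.le
  -- the Finset F for the lower bound
  have hFne : F.Nonempty := by
    by_contra h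
    rw [Finset.not_nonempty_iff_eq_empty] at h
    simp [h] at hFσ
    linarith
  set Dm : ℕ := F.sup Polynomial.natDegree with hDmdef
  have hDm2 : 2 ≤ Dm := by
    obtain ⟨φ, hφ⟩ := hFne
    exact le_trans (hdeg φ (hFS hφ)) (Finset.le_sup hφ)
  have hDmpos : (0:ℝ) < (Dm:ℝ) := by
    have : (2:ℝ) ≤ (Dm:ℝ) := by exact_mod_cast hDm2
    linarith
  refine ⟨b, hb0, Real.exp (2*C+1), ?_⟩
  intro P hP
  have hP0 : 0 < ratH P := lt_of_lt_of_le (Real.exp_pos _) (le_of_lt hP)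
  have hPlog : 2*C+1 < rath P := (Real.lt_log_iff_exp_lt hP0).mpr hP
  set hp := rath P with hpdef
  have hp1 : 1 < hp - 2*C := by linarith
  have hppos : 0 < hp + 2*C := by linarith
  have hpmpos : 0 < hp - 2*C := by linarith
  refine ⟨((Dm:ℝ)) ^ (-b) / (hp + 2*C) ^ b, K, Real.exp (hp + 2*C), ?_, by linarith, ?_⟩
  · apply div_pos (Real.rpow_pos_of_pos hDmpos _) (Real.rpow_pos_of_pos hppos _)
  intro B hB
  have hB0 : 0 < B := lt_of_lt_of_le (Real.exp_pos _) hB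
  have hlogB : hp + 2*C ≤ Real.log B := (Real.le_log_iff_exp_le hB0).mpr hB
  have hlogB0 : 0 < Real.log B := lt_of_lt_of_le hppos hlogB
  set T₁ := Real.log B / (hp + 2*C) with hT₁def
  set T₂ := Real.log B / (hp - 2*C) with hT₂def
  have hT₁1 : 1 ≤ T₁ := (one_le_div hppos).mpr hlogB
  have hT₁₂ : T₁ ≤ T₂ := by
    apply div_le_div_of_nonneg_left hlogB0.le hpmpos
    linarith
  have hT₂1 : 1 ≤ T₂ := hT₁1.trans hT₁₂
  set NB := {L : List (Polynomial ℚ) | (∀ φ ∈ L, φ ∈ S) ∧ ratH (applyList L P) ≤ B}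
    with hNBdef
  have hsub1 : WSet S T₁ ⊆ NB := by
    rintro L ⟨hLS, hLT⟩
    refine ⟨hLS, ?_⟩
    have htel := height_telescope hdeg C hC0 hC P hLS
    have hD1 : (1:ℝ) ≤ (Dlist L : ℝ) := by exact_mod_cast one_le_Dlist hdeg hLS
    have hsw := (sandwich _ _ _ _ hC0 hD1 htel).2
    have h2 : (Dlist L : ℝ) * (hp + 2*C) ≤ Real.log B := by
      have := (le_div_iff₀ hppos).mp hLT
      linarith
    have h3 : rath (applyList L P) ≤ Real.log B := le_trans hsw h2
    have h4 : 0 < ratH (applyList L P) := lt_of_lt_of_le one_pos (one_le_ratH _)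
    exact (Real.log_le_log_iff h4 hB0).mp h3
  have hsub2 : NB ⊆ WSet S T₂ := by
    rintro L ⟨hLS, hLB⟩
    refine ⟨hLS, ?_⟩
    have htel := height_telescope hdeg C hC0 hC P hLS
    have hD1 : (1:ℝ) ≤ (Dlist L : ℝ) := by exact_mod_cast one_le_Dlist hdeg hLS
    have h4 : 0 < ratH (applyList L P) := lt_of_lt_of_le one_pos (one_le_ratH _)
    have h1 : rath (applyList L P) ≤ Real.log B := (Real.log_le_log_iff h4 hB0).mpr hLB
    have h2 : (Dlist L : ℝ) * (hp - 2*C) ≤ rath (applyList L P) :=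
      (sandwich _ _ _ _ hC0 hD1 htel).1
    rw [hT₂def, le_div_iff₀ hpmpos]
    linarith
  have hfinNB : NB.Finite := (WSet_finite hdeg hinj T₂).subset hsub2
  refine ⟨hfinNB, ?_, ?_⟩
  · -- lower bound
    have hlow := W_lower hdeg hinj b hb0 F hFS hFσ.le ⌈T₁⌉₊ T₁ hT₁1 (Nat.le_ceil T₁)
    have hmono : ((WSet S T₁).ncard : ℝ) ≤ (NB.ncard : ℝ) := by
      exact_mod_cast Set.ncard_le_ncard hsub1 hfinNB
    have heq : ((Dm:ℝ)) ^ (-b) / (hp + 2*C) ^ b * Real.log B ^ b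
        = ((Dm:ℝ)) ^ (-b) * T₁ ^ b := by
      rw [hT₁def, Real.div_rpow hlogB0.le hppos.le]
      ring
    calc ((Dm:ℝ)) ^ (-b) / (hp + 2*C) ^ b * Real.log B ^ b
        = ((Dm:ℝ)) ^ (-b) * T₁ ^ b := heq
    _ ≤ ((WSet S T₁).ncard : ℝ) := hlow
    _ ≤ (NB.ncard : ℝ) := hmono
  · -- upper bound
    have hup := W_upper hdeg hinj (b+ε) θ K hθ1 (by linarith) hsumS hK hK2
      ⌈T₂⌉₊ T₂ hT₂1 (Nat.le_ceil T₂)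
    have hmono2 : (NB.ncard : ℝ) ≤ ((WSet S T₂).ncard : ℝ) := by
      exact_mod_cast Set.ncard_le_ncard hsub2 (WSet_finite hdeg hinj T₂)
    have hT₂B : T₂ ≤ Real.log B := by
      rw [hT₂def]
      exact div_le_self hlogB0.le (by linarith)
    have hpow : T₂ ^ (b+ε) ≤ Real.log B ^ (b+ε) :=
      Real.rpow_le_rpow (by linarith) hT₂B (by linarith)
    calc (NB.ncard : ℝ) ≤ ((WSet S T₂).ncard : ℝ) := hmono2
    _ ≤ K * T₂ ^ (b+ε) := hup
    _ ≤ K * Real.log B ^ (b+ε) := mul_le_mul_of_nonneg_left hpow (by linarith)
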